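/- arXiv:2503.02990 — 2 statements merged into one kernel-verified Lean document; each statement's English description precedes it below -/
import Mathlib

section
/- Let a₁,…,a_k ∈ [n] with n ∈ {a₁,…,a_k}, and let 𝓑₁,…,𝓑_t be the induced blocks with n ∈ 𝓑_t. Then for uniformly random (ω,τ) ∈ 𝔖_{n,r}: E[X_{a₁}⋯X_{a_k}] = ((r-1)/r)^{|𝓑_t|} · ∏_{i=1}^t 1/|𝓑_i|!. -/
open scoped Classical BigOperators

namespace ColoredPerm

/-- A colored permutation: a pair of a permutation of `Fin n` and a coloring. -/
abbrev CP (n r : ℕ) := Equiv.Perm (Fin n) × (Fin n → ZMod r)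

/-- Index `i : Fin n` represents position `i+1 ∈ [n]`.  Descent at position `i+1`. -/
def IsDescent {n r : ℕ} (σ : CP n r) (i : Fin n) : Prop :=
  if h : (i : ℕ) + 1 < n then
    (σ.2 ⟨(i : ℕ) + 1, h⟩).val < (σ.2 i).val ∨
      (σ.2 i = σ.2 ⟨(i : ℕ) + 1, h⟩ ∧ σ.1 ⟨(i : ℕ) + 1, h⟩ < σ.1 i)
  else (σ.2 i).val ≠ 0

/-- Descent indicator. -/
noncomputable def X {n r : ℕ} (i : Fin n) (σ : CP n r) : ℚ :=
  if IsDescent σ i then 1 else 0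

/-- Color indicator `Y_{i,c}`. -/
noncomputable def Y {n r : ℕ} (i : Fin n) (c : ZMod r) (σ : CP n r) : ℚ :=
  if σ.2 i = c then 1 else 0

noncomputable def des {n r : ℕ} (σ : CP n r) : ℕ :=
  (Finset.univ.filter (fun i => IsDescent σ i)).card

/-- Major index: sum of descent positions lying in `[n-1]`. -/
noncomputable def maj {n r : ℕ} (σ : CP n r) : ℕ :=
  ∑ i ∈ Finset.univ.filter (fun i : Fin n => IsDescent σ i ∧ (i : ℕ) + 1 < n),
    ((i : ℕ) + 1)

def col {n r : ℕ} (σ : CP n r) : ℕ := ∑ i, (σ.2 i).val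

noncomputable def fmaj {n r : ℕ} (σ : CP n r) : ℕ := r * maj σ + col σ

/-- Ordinary descent of a permutation of `Fin n` at position `i+1` (no descent at last position). -/
def IsDescentS {n : ℕ} (w : Equiv.Perm (Fin n)) (i : Fin n) : Prop :=
  if h : (i : ℕ) + 1 < n then w ⟨(i : ℕ) + 1, h⟩ < w i else False

noncomputable def XS {n : ℕ} (i : Fin n) (w : Equiv.Perm (Fin n)) : ℚ :=
  if IsDescentS w i then 1 else 0

noncomputable def majS {n : ℕ} (w : Equiv.Perm (Fin n)) : ℕ :=
  ∑ i ∈ Finset.univ.filter (fun i : Fin n => IsDescentS w i ∧ (i : ℕ) + 1 < n),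
    ((i : ℕ) + 1)

/-- Expectation of `f` under the uniform distribution on a finite set `S`. -/
noncomputable def E {α : Type*} (S : Finset α) (f : α → ℚ) : ℚ :=
  (∑ x ∈ S, f x) / S.card

/-- Group multiplication of the wreath product `ℤ_r ≀ 𝔖_n`. -/
def cmul {n r : ℕ} (x y : CP n r) : CP n r :=
  (x.1 * y.1, fun i => x.2 (y.1 i) + y.2 i)

/-- Inverse in the wreath product. -/
def cinv {n r : ℕ} (x : CP n r) : CP n r :=
  (x.1⁻¹, fun i => - x.2 (x.1⁻¹ i))

/-- Conjugacy in the colored permutation group. -/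
def IsConjCP {n r : ℕ} (x y : CP n r) : Prop :=
  ∃ g : CP n r, cmul (cmul g x) (cinv g) = y

/-- The elements in the same cycle of `σ` as `i`. -/
noncomputable def cycleSet {n r : ℕ} (σ : CP n r) (i : Fin n) : Finset (Fin n) :=
  Finset.univ.filter (fun x => σ.1.SameCycle i x)

/-- The number of cycles of `σ` of length `ℓ` whose colors sum to `j`. -/
noncomputable def cycleCount {n r : ℕ} (σ : CP n r) (ℓ : ℕ) (j : ZMod r) : ℕ :=
  (Finset.univ.filter (fun i : Fin n =>
      (cycleSet σ i).card = ℓ ∧ (∑ x ∈ cycleSet σ i, σ.2 x) = j)).card / ℓ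

/-- `σ` has no cycle of length `ℓ`. -/
def NoCycleOfLength {n r : ℕ} (σ : CP n r) (ℓ : ℕ) : Prop :=
  ∀ i : Fin n, (cycleSet σ i).card ≠ ℓ

/-- `C` is a conjugacy class of `𝔖_{n,r}`. -/
def IsConjClass {n r : ℕ} [NeZero r] (C : Finset (CP n r)) : Prop :=
  ∃ σ₀ : CP n r, C = Finset.univ.filter (fun σ => IsConjCP σ₀ σ)

/-- `C` has no cycles of lengths `1, 2, …, m`. -/
def NoShortCycles {n r : ℕ} (C : Finset (CP n r)) (m : ℕ) : Prop :=
  ∀ σ ∈ C, ∀ ℓ, 1 ≤ ℓ → ℓ ≤ m → NoCycleOfLength σ ℓ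

/-- The relation identifying `a_i` with `a_i + 1` (on indices: `a i` with the index of
value `(a i) + 1`, when it exists). -/
def adjRel {n k : ℕ} (a : Fin k → Fin n) (p q : Fin n) : Prop :=
  (∃ i, a i = p) ∧ (q : ℕ) = (p : ℕ) + 1

/-- Being in the same block induced by `a`. -/
def SameBlock {n k : ℕ} (a : Fin k → Fin n) (p q : Fin n) : Prop :=
  Relation.EqvGen (adjRel a) p q

/-- The block containing `p`. -/
noncomputable def blockOf {n k : ℕ} (a : Fin k → Fin n) (p : Fin n) : Finset (Fin n) :=
  Finset.univ.filter (fun q => SameBlock a p q)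

/-- The set of blocks induced by `a`. -/
noncomputable def blocks {n k : ℕ} (a : Fin k → Fin n) : Finset (Finset (Fin n)) :=
  Finset.univ.image (blockOf a)

/-- `∏_i 1/|𝓑_i|!` over the blocks induced by `a`. -/
noncomputable def blockProd {n k : ℕ} (a : Fin k → Fin n) : ℚ :=
  ∏ b ∈ blocks a, (1 : ℚ) / (Nat.factorial b.card)

end ColoredPerm

namespace ColoredPerm

noncomputable def ER {α : Type*} (S : Finset α) (f : α → ℝ) : ℝ :=
  (∑ x ∈ S, f x) / S.card

noncomputable def XR {n r : ℕ} (i : Fin n) (σ : CP n r) : ℝ :=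
  if IsDescent σ i then 1 else 0

noncomputable def XSR {n : ℕ} (i : Fin n) (w : Equiv.Perm (Fin n)) : ℝ :=
  if IsDescentS w i then 1 else 0

end ColoredPerm

/-!
Encode each position `q` of `σ = (ω, τ)` by the key `(τ q, ω q)`, ordered lexicographically.
A descent at an interior position `p` is exactly a strict decrease of the key from `p` to `p + 1`,
so `σ` has descents at all `aᵢ` iff its keys strictly decrease along every block and the last
position has a nonzero color; since colors weakly decrease along a block, the latter says that the
whole last block `𝓑_t` has nonzero colors. Permuting positions inside blocks acts freely, and every
orbit of an element with nonzero colors on `𝓑_t` contains exactly one element whose keys decrease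
along every block (sort each block). Hence
`#{σ : descents at all aᵢ} · ∏ |𝓑ᵢ|! = n! (r - 1)^|𝓑_t| r^(n - |𝓑_t|)`.
-/

open ColoredPerm Equiv Finset

lemma Nat.mul_add_lt_mul_add_iff {n a b c d : ℕ} (hb : b < n) (hd : d < n) :
    a * n + b < c * n + d ↔ a < c ∨ a = c ∧ b < d := by
  constructor
  · intro h
    rcases lt_trichotomy a c with hac | rfl | hac
    · exact Or.inl hac
    · exact Or.inr ⟨rfl, by omega⟩
    · have := Nat.mul_le_mul_right n hac
      rw [Nat.succ_mul] at this
      omega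
  · rintro (hac | ⟨rfl, hbd⟩)
    · have := Nat.mul_le_mul_right n hac
      rw [Nat.succ_mul] at this
      omega
    · omega

lemma Equiv.Perm.comp_inv_eq_of_comp_eq {α β : Type*} {f : α → β} {g : Perm α}
    (hg : f ∘ g = f) : f ∘ ⇑g⁻¹ = f := by
  funext x
  simpa using (congrFun hg (g⁻¹ x)).symm

lemma Equiv.Perm.le_apply_of_strictMono_on_fibers {α β : Type*} [LinearOrder α]
    [WellFoundedLT α] {f : α → β} {g : Perm α} (hg : f ∘ g = f)
    (hmono : ∀ x y, f x = f y → x < y → g x < g y) (x : α) : x ≤ g x := by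
  induction x using WellFoundedLT.induction with
  | _ x ih =>
    by_contra! hlt
    exact (ih (g x) hlt).not_gt (hmono _ _ (congrFun hg x) hlt)

lemma Equiv.Perm.eq_one_of_strictMono_on_fibers {α β : Type*} [LinearOrder α]
    [WellFoundedLT α] {f : α → β} {g : Perm α} (hg : f ∘ g = f)
    (hmono : ∀ x y, f x = f y → x < y → g x < g y) : g = 1 := by
  have hg' := Perm.comp_inv_eq_of_comp_eq hg
  have hmono' : ∀ x y, f x = f y → x < y → g⁻¹ x < g⁻¹ y := by
    intro x y hxy hlt
    have hfib : f (g⁻¹ y) = f (g⁻¹ x) := by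
      simp only [← Function.comp_apply (f := f), hg', hxy]
    by_contra! hle
    rcases hle.lt_or_eq with h | h
    · have hyx := hmono _ _ hfib h
      simp only [Perm.coe_inv, apply_symm_apply] at hyx
      exact lt_asymm hlt hyx
    · exact hlt.ne (by simpa using congrArg g h.symm)
  refine Equiv.ext fun x => le_antisymm ?_ (Perm.le_apply_of_strictMono_on_fibers hg hmono x)
  simpa using Perm.le_apply_of_strictMono_on_fibers hg' hmono' (g x)

lemma sum_mul_lt_sum_mul_comp_swap {ι : Type*} [Fintype ι] [DecidableEq ι] {w v : ι → ℕ}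
    {p p' : ι} (hw : w p' < w p) (hv : v p < v p') :
    ∑ q, w q * v q < ∑ q, w q * v (swap p p' q) := by
  have hne : p ≠ p' := by rintro rfl; exact hw.false
  have hp' : p' ∈ univ.erase p := mem_erase.2 ⟨hne.symm, mem_univ _⟩
  have split : ∀ u : ι → ℕ, ∑ q, u q = u p + (u p' + ∑ q ∈ (univ.erase p).erase p', u q) := by
    intro u
    rw [add_sum_erase _ _ hp', add_sum_erase _ _ (mem_univ p)]
  have hrest : ∑ q ∈ (univ.erase p).erase p', w q * v (swap p p' q)
      = ∑ q ∈ (univ.erase p).erase p', w q * v q := by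
    refine sum_congr rfl fun q hq => ?_
    rw [swap_apply_of_ne_of_ne (ne_of_mem_erase (mem_of_mem_erase hq)) (ne_of_mem_erase hq)]
  rw [split, split fun q => w q * v (swap p p' q), hrest, swap_apply_left, swap_apply_right]
  obtain ⟨d, hd⟩ := Nat.exists_eq_add_of_lt hw
  obtain ⟨e, he⟩ := Nat.exists_eq_add_of_lt hv
  rw [hd, he]
  nlinarith

namespace ColoredPerm

variable {n r k : ℕ}

/-- The lexicographic order on `(color, value)` at a position, encoded in `ℕ` so that keys can be
summed with weights. -/
def key (σ : CP n r) (q : Fin n) : ℕ := (σ.2 q).val * n + σ.1 q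

lemma key_lt_key_iff {σ : CP n r} {p q : Fin n} :
    key σ p < key σ q ↔
      (σ.2 p).val < (σ.2 q).val ∨ (σ.2 p).val = (σ.2 q).val ∧ σ.1 p < σ.1 q :=
  Nat.mul_add_lt_mul_add_iff (σ.1 p).isLt (σ.1 q).isLt

lemma key_injective (σ : CP n r) : Function.Injective (key σ) := by
  intro p q h
  have hval : ((σ.1 p : ℕ)) = σ.1 q := by
    have := congrArg (· % n) h
    simpa only [key, Nat.mul_add_mod_of_lt (Fin.isLt _)] using this
  exact σ.1.injective (Fin.ext hval)

lemma isDescent_iff_key_lt [NeZero r] {σ : CP n r} {p : Fin n} (hp : (p : ℕ) + 1 < n) :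
    IsDescent σ p ↔ key σ ⟨p + 1, hp⟩ < key σ p := by
  rw [IsDescent, dif_pos hp, key_lt_key_iff, eq_comm (a := σ.2 p), ← (ZMod.val_injective r).eq_iff]

lemma isDescent_iff_of_last {σ : CP n r} {p : Fin n} (hp : (p : ℕ) + 1 = n) :
    IsDescent σ p ↔ σ.2 p ≠ 0 := by
  rw [IsDescent, dif_neg (by omega), ZMod.val_ne_zero]

lemma key_lt_key_of_forall_isDescent [NeZero r] {σ : CP n r} {p q : Fin n} (hpq : p < q)
    (hdes : ∀ s : Fin n, p ≤ s → s < q → IsDescent σ s) : key σ q < key σ p := by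
  obtain ⟨q, hq⟩ := q
  change (p : ℕ) + 1 ≤ q at hpq
  induction q, hpq using Nat.le_induction with
  | base => exact (isDescent_iff_key_lt hq).1 (hdes p le_rfl (Fin.lt_def.2 (by simp)))
  | succ m hm ih =>
    have hm' : m < n := by omega
    calc key σ ⟨m + 1, hq⟩ < key σ ⟨m, hm'⟩ :=
          (isDescent_iff_key_lt (p := ⟨m, hm'⟩) hq).1
            (hdes _ (Fin.le_def.2 (by simp; omega)) (Fin.lt_def.2 (by simp)))
      _ < key σ p := ih hm' fun s hps hsm => hdes s hps (hsm.trans (Fin.lt_def.2 (by simp)))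

section Blocks

variable {a : Fin k → Fin n} {p q : Fin n}

lemma mem_blockOf : q ∈ blockOf a p ↔ SameBlock a p q := by
  simp [blockOf]

lemma blockOf_eq_blockOf_iff : blockOf a p = blockOf a q ↔ SameBlock a p q := by
  have equiv := Relation.EqvGen.is_equivalence (adjRel a)
  refine ⟨fun h => mem_blockOf.1 (h ▸ mem_blockOf.2 (equiv.refl q)), fun h => ?_⟩
  ext s
  simp only [mem_blockOf]
  exact ⟨equiv.trans (equiv.symm h), equiv.trans h⟩

lemma SameBlock.exists_eq_of_le_of_lt (h : SameBlock a p q) {s : ℕ}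
    (hps : min (p : ℕ) q ≤ s) (hsq : s < max (p : ℕ) q) : ∃ i, (a i : ℕ) = s := by
  induction h generalizing s with
  | rel p q hpq =>
    obtain ⟨⟨i, hi⟩, hq⟩ := hpq
    exact ⟨i, by rw [hi]; omega⟩
  | refl p => omega
  | symm p q _ ih => exact ih (by omega) (by omega)
  | trans p q u _ _ ih₁ ih₂ =>
    by_cases hs : min (p : ℕ) q ≤ s ∧ s < max (p : ℕ) q
    · exact ih₁ hs.1 hs.2
    · exact ih₂ (by omega) (by omega)

noncomputable def blockPerms (a : Fin k → Fin n) : Finset (Perm (Fin n)) :=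
  univ.filter fun g => blockOf a ∘ g = blockOf a

lemma mem_blockPerms {g : Perm (Fin n)} : g ∈ blockPerms a ↔ blockOf a ∘ g = blockOf a := by
  simp [blockPerms]

lemma one_mem_blockPerms : 1 ∈ blockPerms a := mem_blockPerms.2 rfl

lemma mul_mem_blockPerms {g h : Perm (Fin n)} (hg : g ∈ blockPerms a) (hh : h ∈ blockPerms a) :
    g * h ∈ blockPerms a := by
  rw [mem_blockPerms, Perm.coe_mul, ← Function.comp_assoc, mem_blockPerms.1 hg,
    mem_blockPerms.1 hh]

lemma inv_mem_blockPerms {g : Perm (Fin n)} (hg : g ∈ blockPerms a) : g⁻¹ ∈ blockPerms a :=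
  mem_blockPerms.2 (Perm.comp_inv_eq_of_comp_eq (mem_blockPerms.1 hg))

lemma mem_blockPerms_iff_sameBlock {g : Perm (Fin n)} :
    g ∈ blockPerms a ↔ ∀ p, SameBlock a p (g p) := by
  simp only [mem_blockPerms, funext_iff, Function.comp_apply, eq_comm (a := blockOf a (g _)),
    blockOf_eq_blockOf_iff]

lemma swap_mem_blockPerms {i : Fin k} (hi : (a i : ℕ) + 1 < n) :
    swap (a i) ⟨a i + 1, hi⟩ ∈ blockPerms a := by
  have hadj : SameBlock a (a i) ⟨a i + 1, hi⟩ := Relation.EqvGen.rel _ _ ⟨⟨i, rfl⟩, rfl⟩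
  refine mem_blockPerms_iff_sameBlock.2 fun p => ?_
  rw [swap_apply_def]
  split_ifs with h₁ h₂
  · exact h₁ ▸ hadj
  · exact h₂ ▸ Relation.EqvGen.symm _ _ hadj
  · exact Relation.EqvGen.refl p

lemma card_blockPerms : #(blockPerms a) = ∏ b ∈ blocks a, b.card.factorial := by
  rw [blockPerms, ← Fintype.card_subtype, DomMulAct.stabilizer_card']
  refine prod_congr rfl fun b hb => ?_
  obtain ⟨p, -, rfl⟩ := mem_image.1 hb
  rw [Fintype.card_subtype]
  congr 2
  ext q
  simp only [mem_filter, mem_univ, true_and, mem_blockOf, blockOf_eq_blockOf_iff]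
  exact ⟨Relation.EqvGen.symm _ _, Relation.EqvGen.symm _ _⟩

end Blocks

def HasDescentsAt (a : Fin k → Fin n) (σ : CP n r) : Prop := ∀ i, IsDescent σ (a i)

def precomp (σ : CP n r) (g : Perm (Fin n)) : CP n r := (σ.1 * g, σ.2 ∘ g)

lemma precomp_precomp (σ : CP n r) (g h : Perm (Fin n)) :
    precomp (precomp σ g) h = precomp σ (g * h) := by
  simp only [precomp, mul_assoc, Perm.coe_mul, Function.comp_assoc]

@[simp]
lemma precomp_one (σ : CP n r) : precomp σ 1 = σ := Prod.ext (mul_one _) rfl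

/-- Weights decrease along positions, so moving a larger key to an earlier position raises it. -/
def weight (σ : CP n r) : ℕ := ∑ q : Fin n, (n - q) * key σ q

lemma weight_lt_weight_precomp_swap {υ : CP n r} {p : Fin n} (hp : (p : ℕ) + 1 < n)
    (hkey : key υ p < key υ ⟨p + 1, hp⟩) :
    weight υ < weight (precomp υ (swap p ⟨p + 1, hp⟩)) :=
  sum_mul_lt_sum_mul_comp_swap (by simp only; omega) hkey

section Descents

variable [NeZero r] {a : Fin k → Fin n} {σ : CP n r}

lemma HasDescentsAt.key_lt_of_sameBlock (hσ : HasDescentsAt a σ) {p q : Fin n}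
    (hb : SameBlock a p q) (hpq : p < q) : key σ q < key σ p := by
  refine key_lt_key_of_forall_isDescent hpq fun s hps hsq => ?_
  have hpq' : (p : ℕ) < q := hpq
  obtain ⟨i, hi⟩ := hb.exists_eq_of_le_of_lt (s := s)
    (by have : (p : ℕ) ≤ s := hps; omega) (by have : (s : ℕ) < q := hsq; omega)
  exact Fin.ext hi ▸ hσ i

/-- Colors weakly decrease along a block, so a nonzero color at the last position spreads over
its block. -/
lemma HasDescentsAt.color_ne_zero (hσ : HasDescentsAt a σ) {i : Fin k} (hi : (a i : ℕ) + 1 = n)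
    {q : Fin n} (hq : SameBlock a (a i) q) : σ.2 q ≠ 0 := by
  have hlast : σ.2 (a i) ≠ 0 := (isDescent_iff_of_last hi).1 (hσ i)
  rcases (Fin.le_def.2 (by omega : (q : ℕ) ≤ a i)).lt_or_eq with hlt | rfl
  · have hkey := hσ.key_lt_of_sameBlock (Relation.EqvGen.symm _ _ hq) hlt
    rw [← ZMod.val_ne_zero] at hlast ⊢
    rcases key_lt_key_iff.1 hkey with h | h <;> omega
  · exact hlast

lemma eq_one_of_hasDescentsAt_precomp (hσ : HasDescentsAt a σ) {g : Perm (Fin n)}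
    (hg : g ∈ blockPerms a) (hσg : HasDescentsAt a (precomp σ g)) : g = 1 := by
  refine Perm.eq_one_of_strictMono_on_fibers (mem_blockPerms.1 hg) fun p q hpq hlt => ?_
  have hgpq : SameBlock a (g q) (g p) := by
    rw [← blockOf_eq_blockOf_iff]
    have hfib := mem_blockPerms.1 hg
    exact (congrFun hfib q).trans (hpq.symm.trans (congrFun hfib p).symm)
  have hkey : key σ (g q) < key σ (g p) :=
    hσg.key_lt_of_sameBlock (blockOf_eq_blockOf_iff.1 hpq) hlt
  rcases lt_trichotomy (g p) (g q) with h | h | h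
  · exact h
  · exact absurd (congrArg (key σ) h) hkey.ne'
  · exact absurd (hσ.key_lt_of_sameBlock hgpq h) hkey.not_gt

/-- Sorting every block into decreasing order of keys, realised as a weight maximiser over the
block permutations. -/
lemma exists_hasDescentsAt_precomp {τ : CP n r} {i₀ : Fin k} (hi₀ : (a i₀ : ℕ) + 1 = n)
    (hτ : ∀ q, SameBlock a (a i₀) q → τ.2 q ≠ 0) :
    ∃ g ∈ blockPerms a, HasDescentsAt a (precomp τ g) := by
  obtain ⟨g, hg, hmax⟩ := (blockPerms a).exists_max_image (fun g => weight (precomp τ g))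
    ⟨1, one_mem_blockPerms⟩
  refine ⟨g, hg, fun i => ?_⟩
  by_cases hi : (a i : ℕ) + 1 < n
  · rw [isDescent_iff_key_lt hi]
    by_contra! hle
    have hlt := hle.lt_of_ne ((key_injective _).ne (by simp [Fin.ext_iff]))
    have := hmax _ (mul_mem_blockPerms hg (swap_mem_blockPerms hi))
    rw [← precomp_precomp] at this
    exact (weight_lt_weight_precomp_swap hi hlt).not_ge this
  · have hlast : a i = a i₀ := Fin.ext (by omega)
    rw [isDescent_iff_of_last (by omega)]
    exact hτ _ (hlast ▸ mem_blockPerms_iff_sameBlock.1 hg (a i))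

theorem card_hasDescentsAt_mul_card_blockPerms {i₀ : Fin k} (hi₀ : (a i₀ : ℕ) + 1 = n) :
    #(univ.filter (HasDescentsAt a : CP n r → Prop)) * #(blockPerms a) =
      #(univ.filter fun τ : CP n r => ∀ q ∈ blockOf a (a i₀), τ.2 q ≠ 0) := by
  rw [← card_product]
  refine card_bij (fun x _ => precomp x.1 x.2) ?_ ?_ ?_
  · rintro ⟨σ, g⟩ hx
    obtain ⟨hσ, hg⟩ := mem_product.1 hx
    refine mem_filter.2 ⟨mem_univ _, fun q hq => ?_⟩
    exact (mem_filter.1 hσ).2.color_ne_zero hi₀ (Relation.EqvGen.trans _ _ _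
      (mem_blockOf.1 hq) (mem_blockPerms_iff_sameBlock.1 hg q))
  · rintro ⟨σ, g⟩ hx ⟨σ', g'⟩ hx' h
    obtain ⟨hσ, hg⟩ := mem_product.1 hx
    obtain ⟨hσ', hg'⟩ := mem_product.1 hx'
    have hσ'_eq : σ' = precomp σ (g * g'⁻¹) := by
      simpa [precomp_precomp] using (congrArg (precomp · g'⁻¹) h).symm
    have hone := eq_one_of_hasDescentsAt_precomp (mem_filter.1 hσ).2
      (mul_mem_blockPerms hg (inv_mem_blockPerms hg')) (hσ'_eq ▸ (mem_filter.1 hσ').2)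
    rw [mul_inv_eq_one] at hone
    subst hone
    simp [hσ'_eq]
  · intro τ hτ
    obtain ⟨g, hg, hσ⟩ := exists_hasDescentsAt_precomp hi₀
      fun q hq => (mem_filter.1 hτ).2 q (mem_blockOf.2 hq)
    refine ⟨(precomp τ g, g⁻¹), mem_product.2 ⟨mem_filter.2 ⟨mem_univ _, hσ⟩, ?_⟩, ?_⟩
    · exact inv_mem_blockPerms hg
    · simp [precomp_precomp]

end Descents

lemma card_filter_forall_color_ne_zero [NeZero r] (B : Finset (Fin n)) :
    #(univ.filter fun τ : CP n r => ∀ q ∈ B, τ.2 q ≠ 0) =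
      n.factorial * ((r - 1) ^ #B * r ^ #Bᶜ) := by
  have hprod : (univ.filter fun τ : CP n r => ∀ q ∈ B, τ.2 q ≠ 0) =
      univ ×ˢ Fintype.piFinset fun q => if q ∈ B then univ.erase 0 else univ := by
    ext ⟨ω, c⟩
    simp only [mem_filter, mem_univ, true_and, mem_product, Fintype.mem_piFinset]
    refine forall_congr' fun q => ?_
    split_ifs with hq <;> simp [hq]
  rw [hprod, card_product, card_univ, Fintype.card_perm, Fintype.card_fin, Fintype.card_piFinset]
  simp only [apply_ite card, card_erase_of_mem (mem_univ _), card_univ, ZMod.card, prod_ite,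
    prod_const, filter_mem_eq_inter, univ_inter, filter_not, ← compl_eq_univ_sdiff]

lemma card_CP [NeZero r] : Fintype.card (CP n r) = n.factorial * r ^ n := by
  rw [Fintype.card_prod, Fintype.card_perm, Fintype.card_fun, ZMod.card, Fintype.card_fin]

lemma prod_X_eq_ite {a : Fin k → Fin n} (σ : CP n r) :
    ∏ i, X (a i) σ = if HasDescentsAt a σ then 1 else 0 := by
  simp only [X, prod_boole, mem_univ, true_implies]
  exact if_congr Iff.rfl rfl rfl

end ColoredPerm

open ColoredPerm in
theorem expectation_descent_product_with_n (n r k : ℕ) [NeZero r] (hn : 0 < n)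
    (a : Fin k → Fin n) (hmem : ∃ i, (a i : ℕ) + 1 = n) :
    E Finset.univ (fun σ : CP n r => ∏ i, X (a i) σ) =
      (((r : ℚ) - 1) / r) ^ (blockOf a ⟨n - 1, by omega⟩).card * blockProd a := by
  obtain ⟨i₀, hi₀⟩ := hmem
  have hlast : (⟨n - 1, by omega⟩ : Fin n) = a i₀ := Fin.ext (by simp only; omega)
  rw [hlast]
  set B := blockOf a (a i₀)
  have hcount := card_hasDescentsAt_mul_card_blockPerms (r := r) hi₀
  rw [card_filter_forall_color_ne_zero, card_blockPerms] at hcount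
  have hsum : ∑ σ : CP n r, ∏ i, X (a i) σ = #(univ.filter (HasDescentsAt a : CP n r → Prop)) := by
    simp only [prod_X_eq_ite, sum_boole]
  have hcard : (#(univ : Finset (CP n r)) : ℚ) = n.factorial * r ^ #B * r ^ #Bᶜ := by
    rw [card_univ, card_CP, Nat.cast_mul, Nat.cast_pow, mul_assoc, ← pow_add,
      card_add_card_compl, Fintype.card_fin]
  have hcountℚ : (#(univ.filter (HasDescentsAt a : CP n r → Prop)) : ℚ) *
      ∏ b ∈ blocks a, ((#b).factorial : ℚ) = n.factorial * ((r - 1) ^ #B * r ^ #Bᶜ) := by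
    have h := congrArg (Nat.cast (R := ℚ)) hcount
    push_cast [Nat.cast_sub (NeZero.one_le : 1 ≤ r)] at h
    exact h
  have hr : (r : ℚ) ≠ 0 := NeZero.ne _
  rw [E, hsum, hcard, blockProd, prod_div_distrib, prod_const_one, div_pow]
  field_simp
  linear_combination hcountℚ
end

section
/- For any positive integers m and n, E_{𝔖_{n,r}}[X₁X₂⋯X_n] = E_{𝔖_{m+n,r}}[X_{m+1}X_{m+2}⋯X_{m+n}]; that is, the probability a uniformly random element of 𝔖_{n,r} has descents at every position in [n] equals the probability a uniformly random element of 𝔖_{m+n,r} has descents at every position in {m+1,…,m+n}. Both equal ((r-1)/r)^n / n!. -/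
open scoped Classical BigOperators

/-!
Order the positions of a colored permutation by their keys (colour, value), compared
lexicographically. Descents at every position of a final window of length `n` say exactly that
the keys along the window strictly decrease and the last colour is nonzero; since colours are
weakly decreasing along the window, all its colours are then nonzero. Permuting the window
positions is a free action of `𝔖_n` on the colored permutations whose window colours are all
nonzero (the keys are distinct), and each orbit has exactly one element whose window keys
decrease. So exactly `(m + n)! r^m (r - 1)^n / n!` elements of `𝔖_{m+n,r}` have all these
descents, and the probability `((r - 1) / r)^n / n!` does not depend on `m`.
-/

open Finset

theorem Tuple.existsUnique_strictAnti_comp_perm {α : Type*} [LinearOrder α] {n : ℕ}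
    {f : Fin n → α} (hf : Function.Injective f) :
    ∃! π : Equiv.Perm (Fin n), StrictAnti (f ∘ π) := by
  have hsort : Antitone (f ∘ Tuple.sort (OrderDual.toDual ∘ f)) :=
    monotone_toDual_comp_iff.mp (Tuple.monotone_sort (OrderDual.toDual ∘ f))
  refine ⟨_, hsort.strictAnti_of_injective (hf.comp (Equiv.injective _)), fun π hπ => ?_⟩
  exact Equiv.ext (congrFun (hf.comp_left (Tuple.unique_antitone hπ.antitone hsort)))

theorem Tuple.card_filter_strictAnti_comp_perm {α : Type*} [LinearOrder α] {n : ℕ}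
    {f : Fin n → α} (hf : Function.Injective f) :
    #{π : Equiv.Perm (Fin n) | StrictAnti (f ∘ π)} = 1 := by
  obtain ⟨π, hπ, huniq⟩ := Tuple.existsUnique_strictAnti_comp_perm hf
  exact card_eq_one.mpr ⟨π, by ext τ; simpa using ⟨huniq τ, fun h => h ▸ hπ⟩⟩

namespace ColoredPerm

variable {N m n r : ℕ}

def descKey (σ : CP N r) (i : Fin N) : ℕ ×ₗ Fin N := toLex ((σ.2 i).val, σ.1 i)

theorem descKey_injective (σ : CP N r) : Function.Injective (descKey σ) := fun _ _ h =>
  σ.1.injective (congrArg (fun k => (ofLex k).2) h)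

theorem isDescent_iff_descKey_lt [NeZero r] (σ : CP N r) (i : Fin N) (h : (i : ℕ) + 1 < N) :
    IsDescent σ i ↔ descKey σ ⟨i + 1, h⟩ < descKey σ i := by
  simp only [IsDescent, dif_pos h, descKey, Prod.Lex.toLex_lt_toLex, ZMod.val_injective r |>.eq_iff]
  rw [eq_comm (a := σ.2 i)]

theorem isDescent_iff_ne_zero {σ : CP N r} {i : Fin N} (h : ¬ (i : ℕ) + 1 < N) :
    IsDescent σ i ↔ σ.2 i ≠ 0 := by
  simp only [IsDescent, dif_neg h, Ne, ZMod.val_eq_zero]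

def relabel (σ : CP N r) (e : Equiv.Perm (Fin N)) : CP N r := (σ.1 * e, σ.2 ∘ e)

theorem relabel_relabel (σ : CP N r) (e e' : Equiv.Perm (Fin N)) :
    relabel (relabel σ e) e' = relabel σ (e * e') :=
  rfl

theorem relabel_snd (σ : CP N r) (e : Equiv.Perm (Fin N)) : (relabel σ e).2 = σ.2 ∘ e := rfl

theorem relabel_one (σ : CP N r) : relabel σ 1 = σ := rfl

def shiftPerm (m : ℕ) (π : Equiv.Perm (Fin n)) : Equiv.Perm (Fin (m + n)) :=
  Equiv.permCongr finSumFinEquiv (Equiv.sumCongr 1 π)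

@[simp]
theorem shiftPerm_natAdd (π : Equiv.Perm (Fin n)) (j : Fin n) :
    shiftPerm m π (Fin.natAdd m j) = Fin.natAdd m (π j) := by
  simp [shiftPerm, Equiv.permCongr_apply]

theorem shiftPerm_one : shiftPerm m (1 : Equiv.Perm (Fin n)) = 1 := by
  ext i; simp [shiftPerm, Equiv.permCongr_apply]

theorem shiftPerm_mul (π π' : Equiv.Perm (Fin n)) :
    shiftPerm m π * shiftPerm m π' = shiftPerm m (π * π') := by
  ext i; simp [shiftPerm, Equiv.permCongr_apply]

theorem ne_zero_of_descKey_le {σ : CP N r} {i j : Fin N}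
    (hij : descKey σ i ≤ descKey σ j) (hi : σ.2 i ≠ 0) : σ.2 j ≠ 0 := by
  rw [← ZMod.val_ne_zero] at hi ⊢
  have := Prod.Lex.monotone_fst _ _ hij
  simp only [descKey, ofLex_toLex] at this
  omega

def windowKey (m : ℕ) (σ : CP (m + n) r) (j : Fin n) : ℕ ×ₗ Fin (m + n) :=
  descKey σ (Fin.natAdd m j)

def WindowColored (m : ℕ) (c : Fin (m + n) → ZMod r) : Prop :=
  ∀ j : Fin n, c (Fin.natAdd m j) ≠ 0

theorem forall_isDescent_iff [NeZero r] (σ : CP (m + n) r) :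
    (∀ i : Fin (m + n), m ≤ (i : ℕ) → IsDescent σ i) ↔
      StrictAnti (windowKey m σ) ∧ WindowColored m σ.2 := by
  have hwindow : (∀ i : Fin (m + n), m ≤ (i : ℕ) → IsDescent σ i) ↔
      ∀ j : Fin n, IsDescent σ (Fin.natAdd m j) := by
    simp [Fin.forall_fin_add]
  rw [hwindow]
  cases n with
  | zero => simp [WindowColored, Subsingleton.strictAnti]
  | succ k =>
    have hlast : IsDescent σ (Fin.natAdd m (Fin.last k)) ↔ σ.2 (Fin.natAdd m (Fin.last k)) ≠ 0 :=
      isDescent_iff_ne_zero (by simp; omega)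
    have hstep (i : Fin k) : IsDescent σ (Fin.natAdd m i.castSucc) ↔
        windowKey m σ i.succ < windowKey m σ i.castSucc := by
      rw [isDescent_iff_descKey_lt _ _ (by simp; omega)]
      exact Iff.of_eq (congrArg (· < _) (congrArg (descKey σ) (Fin.ext (by simp; omega))))
    rw [Fin.forall_iff_castSucc, Fin.strictAnti_iff_succ_lt, hlast]
    simp only [hstep]
    refine ⟨fun ⟨hne, hanti⟩ => ⟨hanti, fun j => ne_zero_of_descKey_le ?_ hne⟩,
      fun ⟨hanti, hcol⟩ => ⟨hcol _, hanti⟩⟩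
    exact (Fin.strictAnti_iff_succ_lt.mpr hanti).antitone (Fin.le_last j)

theorem windowKey_relabel_shiftPerm (σ : CP (m + n) r) (π : Equiv.Perm (Fin n)) :
    windowKey m (relabel σ (shiftPerm m π)) = windowKey m σ ∘ π := by
  funext j
  simp [windowKey, descKey, relabel]

theorem windowColored_comp_shiftPerm (c : Fin (m + n) → ZMod r) (π : Equiv.Perm (Fin n)) :
    WindowColored m (c ∘ shiftPerm m π) ↔ WindowColored m c := by
  simp only [WindowColored, Function.comp_apply, shiftPerm_natAdd]
  exact π.forall_congr_right (q := fun j => c (Fin.natAdd m j) ≠ 0)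

theorem card_windowColored [NeZero r] :
    #{c : Fin (m + n) → ZMod r | WindowColored m c} = r ^ m * (r - 1) ^ n := by
  have hsplit : univ.filter (fun c : Fin (m + n) → ZMod r => WindowColored m c) =
      (univ ×ˢ Fintype.piFinset fun _ : Fin n => ({0}ᶜ : Finset (ZMod r))).map
        (Fin.appendEquiv m n).toEmbedding := by
    ext c
    rw [mem_filter]
    simp [WindowColored]
  rw [hsplit, card_map, card_product, Fintype.card_piFinset]
  simp [card_compl]

theorem card_windowColored_snd [NeZero r] :
    #{σ : CP (m + n) r | WindowColored m σ.2} = (m + n).factorial * (r ^ m * (r - 1) ^ n) := by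
  rw [← univ_product_univ, filter_product_right (fun c => WindowColored m c), card_product,
    card_windowColored, card_univ, Fintype.card_perm, Fintype.card_fin]

theorem relabel_shiftPerm_inv (σ : CP (m + n) r) (π : Equiv.Perm (Fin n)) :
    relabel (relabel σ (shiftPerm m π)) (shiftPerm m π⁻¹) = σ := by
  rw [relabel_relabel, shiftPerm_mul, mul_inv_cancel, shiftPerm_one, relabel_one]

theorem relabel_inv_shiftPerm (σ : CP (m + n) r) (π : Equiv.Perm (Fin n)) :
    relabel (relabel σ (shiftPerm m π⁻¹)) (shiftPerm m π) = σ := by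
  simpa using relabel_shiftPerm_inv σ π⁻¹

theorem card_strictAnti_windowColored_mul_factorial [NeZero r] :
    #{σ : CP (m + n) r | StrictAnti (windowKey m σ) ∧ WindowColored m σ.2} * n.factorial =
      #{σ : CP (m + n) r | WindowColored m σ.2} := by
  -- Double count the pairs `(σ, π)` such that relabelling the window of `σ` by `π` sorts it.
  set S := univ.filter (fun σ : CP (m + n) r => WindowColored m σ.2)
  set D := univ.filter (fun σ : CP (m + n) r => StrictAnti (windowKey m σ) ∧ WindowColored m σ.2)
  let R (σ : CP (m + n) r) (π : Equiv.Perm (Fin n)) : Prop := relabel σ (shiftPerm m π) ∈ D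
  have hR (σ π) : R σ π ↔ StrictAnti (windowKey m σ ∘ π) ∧ WindowColored m σ.2 := by
    simp only [R, D, mem_filter, mem_univ, true_and, windowKey_relabel_shiftPerm,
      relabel_snd, windowColored_comp_shiftPerm]
  have habove : ∀ σ ∈ S, #(univ.bipartiteAbove R σ) = 1 := by
    intro σ hσ
    rw [mem_filter] at hσ
    simp only [bipartiteAbove, hR, hσ.2, and_true]
    exact Tuple.card_filter_strictAnti_comp_perm
      ((descKey_injective σ).comp (Fin.natAdd_injective _ _))
  have hbelow : ∀ π, #(S.bipartiteBelow R π) = #D := by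
    intro π
    apply card_nbij' (relabel · (shiftPerm m π)) (relabel · (shiftPerm m π⁻¹))
    · intro σ hσ
      exact (mem_filter.mp hσ).2
    · intro δ hδ
      have hδD := mem_coe.mp hδ
      refine mem_filter.mpr ⟨mem_filter.mpr ⟨mem_univ _, ?_⟩, by simpa [R, relabel_inv_shiftPerm]⟩
      exact (windowColored_comp_shiftPerm δ.2 π⁻¹).mpr (mem_filter.mp hδD).2.2
    · intro σ _
      exact relabel_shiftPerm_inv σ π
    · intro δ _
      exact relabel_inv_shiftPerm δ π
  have := sum_card_bipartiteAbove_eq_sum_card_bipartiteBelow (s := S) (t := univ) (r := R)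
  rw [sum_congr rfl habove, sum_congr rfl (fun π _ => hbelow π)] at this
  simpa [Fintype.card_perm, mul_comm] using this.symm

theorem E_prod_X [NeZero r] (s : Finset (Fin N)) :
    E univ (fun σ : CP N r => ∏ i ∈ s, X i σ) =
      #{σ : CP N r | ∀ i ∈ s, IsDescent σ i} / (N.factorial * r ^ N) := by
  simp only [E, X, prod_boole, natCast_card_filter, card_univ, Fintype.card_prod,
    Fintype.card_perm, Fintype.card_fun, Fintype.card_fin, ZMod.card]
  push_cast
  congr!

theorem E_prod_X_window [NeZero r] (h : m + n = N) :
    E univ (fun σ : CP N r => ∏ i ∈ univ.filter (fun i : Fin N => m ≤ (i : ℕ)), X i σ) =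
      (((r : ℚ) - 1) / r) ^ n / n.factorial := by
  subst h
  have hdesc : #{σ : CP (m + n) r | ∀ i ∈ univ.filter (fun i : Fin (m + n) => m ≤ (i : ℕ)),
      IsDescent σ i} = #{σ : CP (m + n) r | StrictAnti (windowKey m σ) ∧ WindowColored m σ.2} := by
    simp only [mem_filter, mem_univ, true_and, forall_isDescent_iff]
  have hcount : (#{σ : CP (m + n) r | StrictAnti (windowKey m σ) ∧ WindowColored m σ.2} : ℚ) =
      (m + n).factorial * (r ^ m * (r - 1 : ℕ) ^ n) / n.factorial := by
    rw [eq_div_iff (by positivity)]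
    exact_mod_cast card_strictAnti_windowColored_mul_factorial.trans card_windowColored_snd
  have hr : ((r - 1 : ℕ) : ℚ) = r - 1 := Nat.cast_pred (Nat.pos_of_neZero r)
  have hr0 : (r : ℚ) ≠ 0 := Nat.cast_ne_zero.mpr (NeZero.ne r)
  rw [E_prod_X, hdesc, hcount, hr, pow_add, div_pow]
  field_simp

end ColoredPerm

open ColoredPerm in
theorem expectation_index_shift_general (n r m : ℕ) [NeZero r] :
    E Finset.univ (fun σ : CP n r => ∏ i, X i σ) =
      E Finset.univ (fun σ : CP (m + n) r =>
        ∏ i ∈ Finset.univ.filter (fun i : Fin (m + n) => m ≤ (i : ℕ)), X i σ) ∧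
    E Finset.univ (fun σ : CP n r => ∏ i, X i σ) =
      (((r : ℚ) - 1) / r) ^ n / Nat.factorial n := by
  have hfull : E Finset.univ (fun σ : CP n r => ∏ i, X i σ) =
      (((r : ℚ) - 1) / r) ^ n / Nat.factorial n := by
    simpa using E_prod_X_window (r := r) (zero_add n)
  exact ⟨hfull.trans (E_prod_X_window rfl).symm, hfull⟩

open ColoredPerm in
theorem expectation_index_shift (n r m : ℕ) [NeZero r] (hn : 0 < n) (hm : 0 < m) :
    E Finset.univ (fun σ : CP n r => ∏ i, X i σ) =
      E Finset.univ (fun σ : CP (m + n) r =>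
        ∏ i ∈ Finset.univ.filter (fun i : Fin (m + n) => m ≤ (i : ℕ)), X i σ) ∧
    E Finset.univ (fun σ : CP n r => ∏ i, X i σ) =
      (((r : ℚ) - 1) / r) ^ n / Nat.factorial n :=
  expectation_index_shift_general n r m
end
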